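/- arXiv:2008.03910 — 4 statements merged into one kernel-verified Lean document; each statement's English description precedes it below -/
import Mathlib

section
/- Fix a positive integer n and real numbers t > 0 and γ > 0, and for each natural number k set a_{t,γ}(k) = (1/Γ(γ)) ∫₀ᵗ r^{γ−1} e^{−(r+t)(2k+n)} dr. Then (i) a_{t,γ}(k) = e^{−t(2k+n)} · (1/Γ(γ)) ∫₀ᵗ r^{γ−1} e^{−r(2k+n)} dr for every k, and (ii) there exist constants C₁ > 0 and C₂ > 0 such that C₁ (2k+n)^{−γ} ≤ e^{t(2k+n)} a_{t,γ}(k) ≤ C₂ (2k+n)^{−γ} for all natural numbers k. -/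
/-!
Factoring `e^{-(r+t)μ} = e^{-tμ} e^{-rμ}` gives (i) and reduces (ii) to two-sided bounds on
`∫₀ᵗ r^{γ-1} e^{-rμ} dr` for `μ = 2k + n ≥ n`. Extending the range to `(0, ∞)` gives the
Gamma integral `Γ(γ) μ^{-γ}` as upper bound. For the lower bound, on `(0, c/μ)` with
`c = min (t n) 1` the exponential is at least `e^{-1}`, leaving `e^{-1} (c/μ)^γ / γ`.
-/

open MeasureTheory Real Set Filter

section TruncatedGammaIntegral

variable {γ μ : ℝ}

lemma setIntegral_mul_exp_neg_add_mul (s : Set ℝ) (f : ℝ → ℝ) (t μ : ℝ) :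
    ∫ r in s, f r * exp (-(r + t) * μ) = exp (-t * μ) * ∫ r in s, f r * exp (-r * μ) := by
  rw [← integral_const_mul]
  congr 1 with r
  rw [show -(r + t) * μ = -r * μ + -t * μ by ring, exp_add]
  ring

lemma integrableOn_rpow_mul_exp_neg_mul_Ioi (hγ : 0 < γ) (hμ : 0 < μ) :
    IntegrableOn (fun r : ℝ => r ^ (γ - 1) * exp (-r * μ)) (Ioi 0) := by
  simpa only [rpow_one, neg_mul, mul_comm μ] using
    integrableOn_rpow_mul_exp_neg_mul_rpow (p := 1) (by linarith : -1 < γ - 1) one_pos hμ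

lemma setIntegral_Ioo_rpow_mul_exp_neg_mul_le (hγ : 0 < γ) (hμ : 0 < μ) (t : ℝ) :
    ∫ r in Ioo 0 t, r ^ (γ - 1) * exp (-r * μ) ≤ Gamma γ * μ ^ (-γ) := by
  calc ∫ r in Ioo 0 t, r ^ (γ - 1) * exp (-r * μ)
      ≤ ∫ r in Ioi 0, r ^ (γ - 1) * exp (-r * μ) :=
        setIntegral_mono_set (integrableOn_rpow_mul_exp_neg_mul_Ioi hγ hμ)
          (ae_restrict_of_forall_mem measurableSet_Ioi fun r (hr : 0 < r) => by positivity)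
          (Eventually.of_forall Ioo_subset_Ioi_self)
    _ = Gamma γ * μ ^ (-γ) := by
        simp only [mul_neg, mul_comm _ μ]
        rw [integral_rpow_mul_exp_neg_mul_Ioi hγ hμ, one_div, inv_rpow hμ.le, rpow_neg hμ.le,
          mul_comm]

lemma exp_neg_one_mul_rpow_div_le_setIntegral_Ioo {m t : ℝ} (hγ : 0 < γ) (hμ : 0 < μ)
    (hm : 0 < m) (hmt : m ≤ t) (hmμ : m * μ ≤ 1) :
    exp (-1) * (m ^ γ / γ) ≤ ∫ r in Ioo 0 t, r ^ (γ - 1) * exp (-r * μ) := by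
  have hγ₁ : -1 < γ - 1 := by linarith
  have hpow : ∫ r in Ioo 0 m, r ^ (γ - 1) = m ^ γ / γ := by
    rw [← integral_Ioc_eq_integral_Ioo, ← intervalIntegral.integral_of_le hm.le,
      integral_rpow (Or.inl hγ₁), zero_rpow (by linarith), sub_add_cancel, sub_zero]
  have hint := integrableOn_rpow_mul_exp_neg_mul_Ioi hγ hμ
  calc exp (-1) * (m ^ γ / γ) = ∫ r in Ioo 0 m, exp (-1) * r ^ (γ - 1) := by
        rw [integral_const_mul, hpow]
    _ ≤ ∫ r in Ioo 0 m, r ^ (γ - 1) * exp (-r * μ) := by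
        refine setIntegral_mono_on (((intervalIntegral.integrableOn_Ioo_rpow_iff hm).2 hγ₁).const_mul _)
          (hint.mono_set Ioo_subset_Ioi_self) measurableSet_Ioo fun r hr => ?_
        have hrμ : r * μ ≤ 1 := by nlinarith [hr.2]
        have := hr.1
        rw [mul_comm]
        gcongr
        linarith
    _ ≤ ∫ r in Ioo 0 t, r ^ (γ - 1) * exp (-r * μ) :=
        setIntegral_mono_set (hint.mono_set Ioo_subset_Ioi_self)
          (ae_restrict_of_forall_mem measurableSet_Ioo fun r hr => by have := hr.1; positivity)
          (Eventually.of_forall (Ioo_subset_Ioo_right hmt))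

lemma rpow_neg_le_setIntegral_Ioo_rpow_mul_exp_neg_mul {t μ₀ : ℝ} (hγ : 0 < γ) (ht : 0 < t)
    (hμ₀ : 0 < μ₀) (hμ : μ₀ ≤ μ) :
    exp (-1) * (min (t * μ₀) 1 ^ γ / γ) * μ ^ (-γ) ≤
      ∫ r in Ioo 0 t, r ^ (γ - 1) * exp (-r * μ) := by
  set c := min (t * μ₀) 1
  have hc : 0 < c := lt_min (by positivity) one_pos
  have hμpos : 0 < μ := hμ₀.trans_le hμ
  have hct : c / μ ≤ t := by
    rw [div_le_iff₀ hμpos]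
    exact (min_le_left _ _).trans (by gcongr)
  have hcμ : c / μ * μ ≤ 1 := by rw [div_mul_cancel₀ _ hμpos.ne']; exact min_le_right _ _
  convert exp_neg_one_mul_rpow_div_le_setIntegral_Ioo hγ hμpos (div_pos hc hμpos) hct hcμ
    using 1
  rw [div_rpow hc.le hμpos.le, rpow_neg hμpos.le]
  ring

end TruncatedGammaIntegral

/-- Coefficients in the proof of Theorem 1.6 for the Hermite heat kernel transform:
with `a_{t,γ}(k) = Γ(γ)⁻¹ ∫₀ᵗ r^{γ−1} e^{−(r+t)(2k+n)} dr`, one has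
(i) `a_{t,γ}(k) = e^{−t(2k+n)} Γ(γ)⁻¹ ∫₀ᵗ r^{γ−1} e^{−r(2k+n)} dr`, and
(ii) `e^{t(2k+n)} a_{t,γ}(k) ≍ (2k+n)^{−γ}` uniformly in `k`. -/
theorem stmt5 (n : ℕ) (hn : 0 < n) (t γ : ℝ) (ht : 0 < t) (hγ : 0 < γ)
    (a : ℕ → ℝ)
    (ha : ∀ k : ℕ, a k = (1 / Real.Gamma γ) *
      ∫ r in Set.Ioo (0 : ℝ) t,
        r ^ (γ - 1) * Real.exp (-(r + t) * (2 * (k : ℝ) + (n : ℝ)))) :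
    (∀ k : ℕ, a k = Real.exp (-t * (2 * (k : ℝ) + (n : ℝ))) *
        ((1 / Real.Gamma γ) *
          ∫ r in Set.Ioo (0 : ℝ) t,
            r ^ (γ - 1) * Real.exp (-r * (2 * (k : ℝ) + (n : ℝ))))) ∧
    ∃ C₁ C₂ : ℝ, 0 < C₁ ∧ 0 < C₂ ∧ ∀ k : ℕ,
      C₁ * (2 * (k : ℝ) + (n : ℝ)) ^ (-γ) ≤
          Real.exp (t * (2 * (k : ℝ) + (n : ℝ))) * a k ∧
      Real.exp (t * (2 * (k : ℝ) + (n : ℝ))) * a k ≤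
          C₂ * (2 * (k : ℝ) + (n : ℝ)) ^ (-γ) := by
  have hΓ : 0 < Gamma γ := Gamma_pos_of_pos hγ
  have hn₀ : (0 : ℝ) < n := by exact_mod_cast hn
  have hshift : ∀ k : ℕ, a k = exp (-t * (2 * k + n)) *
      ((1 / Gamma γ) * ∫ r in Ioo 0 t, r ^ (γ - 1) * exp (-r * (2 * k + n))) := fun k => by
    rw [ha k, setIntegral_mul_exp_neg_add_mul]
    ring
  refine ⟨hshift, (Gamma γ)⁻¹ * (exp (-1) * (min (t * n) 1 ^ γ / γ)), 1, by positivity, one_pos,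
    fun k => ?_⟩
  have hμ : (n : ℝ) ≤ 2 * k + n := by linarith [(k.cast_nonneg : (0 : ℝ) ≤ k)]
  have hexp : exp (t * (2 * k + n)) * a k =
      (Gamma γ)⁻¹ * ∫ r in Ioo 0 t, r ^ (γ - 1) * exp (-r * (2 * k + n)) := by
    rw [hshift k, neg_mul, exp_neg, one_div]
    field_simp
  rw [hexp, mul_assoc]
  constructor
  · gcongr
    exact rpow_neg_le_setIntegral_Ioo_rpow_mul_exp_neg_mul hγ ht hn₀ hμ
  · rw [one_mul, inv_mul_le_iff₀ hΓ]
    exact setIntegral_Ioo_rpow_mul_exp_neg_mul_le hγ (hn₀.trans_le hμ) t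
end

section
/- Fix real numbers s with 0 < s < 1 and λ > 0, and for ρ > 0 define u(ρ) = ρ^s · (1/Γ(s)) ∫₀^∞ e^{−ρ²/(4τ)} e^{−τ λ²} τ^{−s/2 − 1} dτ. Then u is twice differentiable on (0, ∞) and satisfies u''(ρ) + ((1−s)/ρ) · u'(ρ) − λ² u(ρ) = 0 for every ρ > 0. -/
/-!
Substituting `τ = ρ² t` turns `u` into `Γ(s)⁻¹ I_{-s/2-1}(λ²ρ²)`, where
`I_a(x) = ∫₀^∞ e^{-1/(4t)} e^{-xt} t^a dt` (up to elementary factors, a modified Bessel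
function `K_{a+1}(√x)`). Since `e^{-1/(4t)} ≤ n! (4t)^n`, the integrand is dominated near `0`
by any power of `t`, so for `x > 0` everything converges for every real exponent `a`.
Differentiating under the integral sign gives `I_a' = -I_{a+1}`, and integrating the
`t`-derivative of `e^{-1/(4t)} e^{-xt} t^b` over `(0, ∞)` gives the recurrence
`I_{b-2}/4 + b I_{b-1} - x I_b = 0`. For `b = a + 2` this recurrence is exactly the ODE
`w'' + ((2a+3)/r) w' - λ² w = 0` for `w(r) = I_a(λ² r²)`, and `2a + 3 = 1 - s`.
-/

open MeasureTheory Real Set Filter Topology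
open scoped Nat

noncomputable def besselIntegrand (a x t : ℝ) : ℝ :=
  exp (-1 / (4 * t)) * exp (-x * t) * t ^ a

noncomputable def besselIntegral (a x : ℝ) : ℝ :=
  ∫ t in Ioi 0, besselIntegrand a x t

lemma exp_neg_one_div_four_mul_le (n : ℕ) {t : ℝ} (ht : 0 < t) :
    exp (-1 / (4 * t)) ≤ n ! * (4 * t) ^ n := by
  have key := pow_div_factorial_le_exp (x := 1 / (4 * t)) (by positivity) n
  rw [div_le_iff₀ (by positivity)] at key
  calc exp (-1 / (4 * t)) = exp (-1 / (4 * t)) * ((4 * t) ^ n * (1 / (4 * t)) ^ n) := by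
        rw [← mul_pow, mul_one_div_cancel (by positivity), one_pow, mul_one]
    _ ≤ exp (-1 / (4 * t)) * ((4 * t) ^ n * (exp (1 / (4 * t)) * n !)) := by gcongr
    _ = n ! * (4 * t) ^ n := by
        rw [neg_div, exp_neg]; field_simp

lemma besselIntegrand_nonneg (a x : ℝ) {t : ℝ} (ht : 0 < t) : 0 ≤ besselIntegrand a x t := by
  unfold besselIntegrand; positivity

lemma continuousOn_besselIntegrand (a x : ℝ) : ContinuousOn (besselIntegrand a x) (Ioi 0) := by
  unfold besselIntegrand
  fun_prop (disch := intro t ht; simp at ht; positivity)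

lemma besselIntegrand_le (a : ℝ) (n : ℕ) {x x' t : ℝ} (hx : x' ≤ x) (ht : 0 < t) :
    besselIntegrand a x t ≤ n ! * 4 ^ n * (t ^ (a + n) * exp (-x' * t)) := by
  rw [besselIntegrand, rpow_add ht, rpow_natCast]
  calc exp (-1 / (4 * t)) * exp (-x * t) * t ^ a
      ≤ (n ! * (4 * t) ^ n) * exp (-x' * t) * t ^ a := by
        gcongr
        exact exp_neg_one_div_four_mul_le n ht
    _ = _ := by ring

lemma integrableOn_besselIntegrand (a : ℝ) {x : ℝ} (hx : 0 < x) :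
    IntegrableOn (besselIntegrand a x) (Ioi 0) := by
  set n := ⌈-a⌉₊
  have hn : -1 < a + n := by linarith [Nat.le_ceil (-a)]
  have hdom : IntegrableOn (fun t => n ! * 4 ^ n * (t ^ (a + n) * exp (-x * t))) (Ioi 0) := by
    have h := integrableOn_rpow_mul_exp_neg_mul_rpow hn zero_lt_one hx
    simp only [rpow_one] at h
    exact h.const_mul _
  refine hdom.mono' ((continuousOn_besselIntegrand a x).aestronglyMeasurable measurableSet_Ioi) ?_
  filter_upwards [self_mem_ae_restrict measurableSet_Ioi] with t ht
  rw [norm_of_nonneg (besselIntegrand_nonneg a x ht)]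
  exact besselIntegrand_le a n le_rfl ht

lemma tendsto_besselIntegrand_nhdsGT_zero (a x : ℝ) :
    Tendsto (besselIntegrand a x) (𝓝[>] 0) (𝓝 0) := by
  set n := ⌈-a⌉₊ + 1
  have hn : 0 < a + n := by simp only [n]; push_cast; linarith [Nat.le_ceil (-a)]
  have hbound :
      Tendsto (fun t : ℝ => n ! * 4 ^ n * (t ^ (a + n) * exp (-x * t))) (𝓝 0) (𝓝 0) := by
    have : Continuous (fun t : ℝ => n ! * 4 ^ n * (t ^ (a + n) * exp (-x * t))) := by
      fun_prop (disch := exact hn.le)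
    simpa [zero_rpow hn.ne'] using this.tendsto 0
  refine squeeze_zero' ?_ ?_ (hbound.mono_left nhdsWithin_le_nhds)
  · filter_upwards [self_mem_nhdsWithin] with t ht using besselIntegrand_nonneg a x ht
  · filter_upwards [self_mem_nhdsWithin] with t ht using besselIntegrand_le a n le_rfl ht

lemma tendsto_besselIntegrand_atTop (a : ℝ) {x : ℝ} (hx : 0 < x) :
    Tendsto (besselIntegrand a x) atTop (𝓝 0) := by
  refine squeeze_zero' ?_ ?_ (tendsto_rpow_mul_exp_neg_mul_atTop_nhds_zero a x hx)
  · filter_upwards [eventually_gt_atTop 0] with t ht using besselIntegrand_nonneg a x ht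
  · filter_upwards [eventually_gt_atTop 0] with t ht
    simpa using besselIntegrand_le a 0 le_rfl ht

lemma hasDerivAt_besselIntegrand_param (a : ℝ) {t : ℝ} (ht : 0 < t) (x : ℝ) :
    HasDerivAt (fun y => besselIntegrand a y t) (-besselIntegrand (a + 1) x t) x := by
  have hlin : HasDerivAt (fun y : ℝ => -y * t) (-t) x := by
    simpa using (hasDerivAt_neg x).mul_const t
  refine ((hlin.exp.const_mul (exp (-1 / (4 * t)))).mul_const (t ^ a)).congr_deriv ?_
  rw [besselIntegrand, rpow_add ht, rpow_one]
  ring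

lemma hasDerivAt_besselIntegrand (b x : ℝ) {t : ℝ} (ht : 0 < t) :
    HasDerivAt (besselIntegrand b x)
      (besselIntegrand (b - 2) x t / 4 + b * besselIntegrand (b - 1) x t
        - x * besselIntegrand b x t) t := by
  have hinv : HasDerivAt (fun t : ℝ => -1 / (4 * t)) (1 / (4 * t ^ 2)) t := by
    have e : (fun t : ℝ => -1 / (4 * t)) = fun t => -1 / 4 * t⁻¹ := by ext; ring
    rw [e]
    exact ((hasDerivAt_inv ht.ne').const_mul (-1 / 4)).congr_deriv (by ring)
  have hlin : HasDerivAt (fun t : ℝ => -x * t) (-x) t := by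
    simpa using (hasDerivAt_id t).const_mul (-x)
  have hpow := hasDerivAt_rpow_const (p := b) (Or.inl ht.ne')
  refine ((hinv.exp.mul hlin.exp).mul hpow).congr_deriv ?_
  simp only [besselIntegrand, Pi.mul_apply]
  rw [rpow_sub ht, rpow_sub ht, rpow_two, rpow_one]
  field_simp
  ring

lemma hasDerivAt_besselIntegral (a : ℝ) {x : ℝ} (hx : 0 < x) :
    HasDerivAt (besselIntegral a) (-besselIntegral (a + 1) x) x := by
  have hball : ∀ y ∈ Metric.ball x (x / 2), x / 2 ≤ y := fun y hy => by
    rw [Metric.mem_ball, Real.dist_eq, abs_lt] at hy; linarith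
  have h := hasDerivAt_integral_of_dominated_loc_of_deriv_le (μ := volume.restrict (Ioi 0))
    (F := fun y t => besselIntegrand a y t) (F' := fun y t => -besselIntegrand (a + 1) y t)
    (bound := besselIntegrand (a + 1) (x / 2)) (Metric.ball_mem_nhds x (half_pos hx))
    (Eventually.of_forall fun y =>
      (continuousOn_besselIntegrand a y).aestronglyMeasurable measurableSet_Ioi)
    (integrableOn_besselIntegrand a hx)
    ((continuousOn_besselIntegrand (a + 1) x).aestronglyMeasurable measurableSet_Ioi).neg
    ?_ (integrableOn_besselIntegrand (a + 1) (by positivity)) ?_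
  · have hd := h.2
    rw [integral_neg] at hd
    exact hd
  · filter_upwards [self_mem_ae_restrict measurableSet_Ioi] with t (ht : 0 < t) y hy
    rw [norm_neg, norm_of_nonneg (besselIntegrand_nonneg _ _ ht)]
    unfold besselIntegrand
    gcongr
    nlinarith [hball y hy]
  · filter_upwards [self_mem_ae_restrict measurableSet_Ioi] with t ht y _
    exact hasDerivAt_besselIntegrand_param a ht y

lemma besselIntegral_recurrence (b : ℝ) {x : ℝ} (hx : 0 < x) :
    besselIntegral (b - 2) x / 4 + b * besselIntegral (b - 1) x - x * besselIntegral b x = 0 := by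
  have h₀ := (integrableOn_besselIntegrand (b - 2) hx).div_const 4
  have h₁ := (integrableOn_besselIntegrand (b - 1) hx).const_mul b
  have h₂ := (integrableOn_besselIntegrand b hx).const_mul x
  have h₀₁ : IntegrableOn (fun t => besselIntegrand (b - 2) x t / 4
      + b * besselIntegrand (b - 1) x t) (Ioi 0) := h₀.add h₁
  -- The boundary value at `0` is a limit, not the junk value `besselIntegrand b x 0`.
  set f := Function.update (besselIntegrand b x) 0 0
  have hf : ∀ t ≠ 0, f t = besselIntegrand b x t := fun t ht => Function.update_of_ne ht _ _
  have hftc := integral_Ioi_of_hasDerivAt_of_tendsto (f := f) (a := 0) (m := 0)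
    (f' := fun t => besselIntegrand (b - 2) x t / 4 + b * besselIntegrand (b - 1) x t
      - x * besselIntegrand b x t) ?_ ?_ (h₀₁.sub h₂) ?_
  · rwa [show f 0 = 0 from Function.update_self .., sub_zero, integral_sub h₀₁ h₂,
      integral_add h₀ h₁, integral_div, integral_const_mul, integral_const_mul] at hftc
  · rw [continuousWithinAt_update_same, Ici_sdiff_left]
    exact tendsto_besselIntegrand_nhdsGT_zero b x
  · intro t (ht : 0 < t)
    refine (hasDerivAt_besselIntegrand b x ht).congr_of_eventuallyEq ?_
    filter_upwards [Ioi_mem_nhds ht] with y (hy : 0 < y) using hf y hy.ne'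
  · refine (tendsto_besselIntegrand_atTop b hx).congr' ?_
    filter_upwards [eventually_ne_atTop 0] with t ht using (hf t ht).symm

lemma setIntegral_exp_mul_exp_mul_rpow (a y : ℝ) {ρ : ℝ} (hρ : 0 < ρ) :
    ∫ τ in Ioi 0, exp (-ρ ^ 2 / (4 * τ)) * exp (-τ * y) * τ ^ a
      = ρ ^ (2 * (a + 1)) * besselIntegral a (y * ρ ^ 2) := by
  have hρ2 : 0 < ρ ^ 2 := by positivity
  have hsub := integral_comp_mul_left_Ioi
    (fun τ => exp (-ρ ^ 2 / (4 * τ)) * exp (-τ * y) * τ ^ a) 0 hρ2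
  rw [mul_zero, smul_eq_mul, eq_inv_mul_iff_mul_eq₀ hρ2.ne'] at hsub
  have hscaled : ∫ t in Ioi 0, exp (-ρ ^ 2 / (4 * (ρ ^ 2 * t))) * exp (-(ρ ^ 2 * t) * y)
      * (ρ ^ 2 * t) ^ a = (ρ ^ 2) ^ a * besselIntegral a (y * ρ ^ 2) := by
    rw [besselIntegral, ← integral_const_mul]
    refine setIntegral_congr_fun measurableSet_Ioi fun t (ht : 0 < t) => ?_
    rw [besselIntegrand, mul_rpow hρ2.le ht.le]
    field_simp
  rw [← hsub, hscaled, rpow_mul hρ.le, rpow_two, rpow_add_one hρ2.ne']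
  ring

lemma hasDerivAt_besselIntegral_sq (a : ℝ) {lam r : ℝ} (hlam : lam ≠ 0) (hr : r ≠ 0) :
    HasDerivAt (fun r => besselIntegral a (lam ^ 2 * r ^ 2))
      (-(2 * lam ^ 2 * r) * besselIntegral (a + 1) (lam ^ 2 * r ^ 2)) r := by
  have hsq : HasDerivAt (fun r => lam ^ 2 * r ^ 2) (lam ^ 2 * (2 * r)) r := by
    simpa using (hasDerivAt_pow 2 r).const_mul (lam ^ 2)
  exact ((hasDerivAt_besselIntegral a (by positivity)).comp r hsq).congr_deriv (by ring)

theorem besselIntegral_sq_ode (a c : ℝ) {lam ρ : ℝ} (hlam : lam ≠ 0) (hρ : ρ ≠ 0) :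
    DifferentiableAt ℝ (fun r => c * besselIntegral a (lam ^ 2 * r ^ 2)) ρ ∧
    DifferentiableAt ℝ (deriv fun r => c * besselIntegral a (lam ^ 2 * r ^ 2)) ρ ∧
    deriv (deriv fun r => c * besselIntegral a (lam ^ 2 * r ^ 2)) ρ
      + ((2 * a + 3) / ρ) * deriv (fun r => c * besselIntegral a (lam ^ 2 * r ^ 2)) ρ
      - lam ^ 2 * (c * besselIntegral a (lam ^ 2 * ρ ^ 2)) = 0 := by
  have hw' : ∀ r ≠ 0, HasDerivAt (fun r => c * besselIntegral a (lam ^ 2 * r ^ 2))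
      (-(2 * c * lam ^ 2) * (r * besselIntegral (a + 1) (lam ^ 2 * r ^ 2))) r := fun r hr =>
    ((hasDerivAt_besselIntegral_sq a hlam hr).const_mul c).congr_deriv (by ring)
  have hderiv : deriv (fun r => c * besselIntegral a (lam ^ 2 * r ^ 2)) =ᶠ[𝓝 ρ]
      fun r => -(2 * c * lam ^ 2) * (r * besselIntegral (a + 1) (lam ^ 2 * r ^ 2)) := by
    filter_upwards [eventually_ne_nhds hρ] with r hr using (hw' r hr).deriv
  have hw'' := (((hasDerivAt_id' ρ).mul (hasDerivAt_besselIntegral_sq (a + 1) hlam hρ)).const_mul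
      (-(2 * c * lam ^ 2))).congr_of_eventuallyEq hderiv
  refine ⟨(hw' ρ hρ).differentiableAt, hw''.differentiableAt, ?_⟩
  have hrec := besselIntegral_recurrence (a + 2) (x := lam ^ 2 * ρ ^ 2) (by positivity)
  rw [hw''.deriv, (hw' ρ hρ).deriv, show a + 1 + 1 = a + 2 by ring]
  rw [show a + 2 - 2 = a by ring, show a + 2 - 1 = a + 1 by ring] at hrec
  field_simp
  linear_combination (-4 * c * lam ^ 2) * hrec

theorem stmt7_general (s lam : ℝ) (hlam : 0 < lam)
    (u : ℝ → ℝ)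
    (hu : ∀ ρ : ℝ, u ρ = ρ ^ s * ((1 / Real.Gamma s) *
      ∫ τ in Set.Ioi (0 : ℝ),
        Real.exp (-ρ ^ 2 / (4 * τ)) * Real.exp (-τ * lam ^ 2) * τ ^ (-s / 2 - 1))) :
    ∀ ρ : ℝ, 0 < ρ →
      DifferentiableAt ℝ u ρ ∧ DifferentiableAt ℝ (deriv u) ρ ∧
      deriv (deriv u) ρ + ((1 - s) / ρ) * deriv u ρ - lam ^ 2 * u ρ = 0 := by
  intro ρ hρ
  have hu_eq :
      u =ᶠ[𝓝 ρ] fun r => 1 / Gamma s * besselIntegral (-s / 2 - 1) (lam ^ 2 * r ^ 2) := by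
    filter_upwards [Ioi_mem_nhds hρ] with r (hr : 0 < r)
    have hpow : r ^ s * r ^ (2 * (-s / 2 - 1 + 1)) = 1 := by
      rw [← rpow_add hr, show s + 2 * (-s / 2 - 1 + 1) = 0 by ring, rpow_zero]
    rw [hu, setIntegral_exp_mul_exp_mul_rpow _ _ hr]
    linear_combination (1 / Gamma s * besselIntegral (-s / 2 - 1) (lam ^ 2 * r ^ 2)) * hpow
  obtain ⟨hd₁, hd₂, hode⟩ :=
    besselIntegral_sq_ode (-s / 2 - 1) (1 / Gamma s) hlam.ne' hρ.ne'
  have hderiv := hu_eq.deriv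
  refine ⟨hd₁.congr_of_eventuallyEq hu_eq, hd₂.congr_of_eventuallyEq hderiv, ?_⟩
  rw [hderiv.deriv_eq, hu_eq.deriv_eq, hu_eq.eq_of_nhds]
  convert hode using 3
  ring

/-- Scalar version of the extension problem for fractional powers of the Laplacian:
`u(ρ) = ρ^s Γ(s)⁻¹ ∫₀^∞ e^{−ρ²/(4τ)} e^{−τλ²} τ^{−s/2−1} dτ` is twice differentiable
on `(0,∞)` and satisfies `u'' + ((1−s)/ρ) u' − λ² u = 0` there. -/
theorem stmt7 (s lam : ℝ) (hs : 0 < s) (hs1 : s < 1) (hlam : 0 < lam)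
    (u : ℝ → ℝ)
    (hu : ∀ ρ : ℝ, u ρ = ρ ^ s * ((1 / Real.Gamma s) *
      ∫ τ in Set.Ioi (0 : ℝ),
        Real.exp (-ρ ^ 2 / (4 * τ)) * Real.exp (-τ * lam ^ 2) * τ ^ (-s / 2 - 1))) :
    ∀ ρ : ℝ, 0 < ρ →
      DifferentiableAt ℝ u ρ ∧ DifferentiableAt ℝ (deriv u) ρ ∧
      deriv (deriv u) ρ + ((1 - s) / ρ) * deriv u ρ - lam ^ 2 * u ρ = 0 :=
  stmt7_general s lam hlam u hu
end

section
/- Fix real numbers s with 0 < s < 1 and λ > 0, and for ρ > 0 define u(ρ) = ρ^s · (1/Γ(s)) ∫₀^∞ e^{−ρ²/(4τ)} e^{−τ λ²} τ^{−s/2 − 1} dτ. Then ρ^{1−s} u'(ρ) converges as ρ → 0⁺, and its limit equals −(2 Γ(1 − s/2)/Γ(s)) · λ^s. -/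
/-!
Substituting `τ = ρ²σ` shows that `u(ρ) = Γ(s)⁻¹ F(λ²ρ²)` with
`F(x) = ∫₀^∞ e^{-1/(4σ)} e^{-xσ} σ^{-s/2-1} dσ`, so `u` depends on `λρ` only. Differentiating under
the integral, `ρ^{1-s} u'(ρ) = -2λ²ρ^{2-s} Γ(s)⁻¹ ∫₀^∞ e^{-1/(4σ)} e^{-λ²ρ²σ} σ^{-s/2} dσ`, and the
substitution `σ = t/(λ²ρ²)` turns this into `-2λ^s Γ(s)⁻¹ ∫₀^∞ e^{-λ²ρ²/(4t)} e^{-t} t^{-s/2} dt`.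
As `ρ → 0⁺` the last integral increases to `∫₀^∞ e^{-t} t^{-s/2} dt = Γ(1 - s/2)`, which converges
because `s < 2`.
-/

open MeasureTheory Real Filter Set
open scoped Nat Topology

/-- For `a, b > 0` this is `2 (a/b)^((p+1)/2) K_{p+1}(2√(ab))`, with `K` the modified Bessel
function of the second kind. -/
noncomputable def besselKIntegral (p a b : ℝ) : ℝ :=
  ∫ τ in Ioi 0, exp (-a / τ) * exp (-τ * b) * τ ^ p

lemma exp_neg_div_le_factorial_mul_pow {a τ : ℝ} (ha : 0 < a) (hτ : 0 < τ) (n : ℕ) :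
    exp (-a / τ) ≤ n ! / a ^ n * τ ^ n := by
  have h := inv_anti₀ (by positivity) (pow_div_factorial_le_exp _ (div_pos ha hτ).le n)
  calc exp (-a / τ) = (exp (a / τ))⁻¹ := by rw [neg_div, exp_neg]
    _ ≤ ((a / τ) ^ n / n !)⁻¹ := h
    _ = n ! / a ^ n * τ ^ n := by rw [inv_div, div_pow]; field_simp

lemma integrableOn_besselKIntegrand {a b : ℝ} (ha : 0 < a) (hb : 0 < b) (p : ℝ) :
    IntegrableOn (fun τ => exp (-a / τ) * exp (-τ * b) * τ ^ p) (Ioi 0) := by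
  set n := ⌈|p|⌉₊
  have hn : -1 < n + p := by linarith [Nat.le_ceil |p|, neg_abs_le p]
  have hdom : IntegrableOn (fun τ => n ! / a ^ n * (τ ^ (n + p) * exp (-b * τ ^ (1 : ℝ))))
      (Ioi 0) := (integrableOn_rpow_mul_exp_neg_mul_rpow hn one_pos hb).const_mul _
  refine hdom.mono' (by fun_prop) ?_
  filter_upwards [ae_restrict_mem measurableSet_Ioi] with τ (hτ : 0 < τ)
  rw [norm_of_nonneg (by positivity), rpow_one, rpow_add hτ, rpow_natCast]
  calc exp (-a / τ) * exp (-τ * b) * τ ^ p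
      ≤ n ! / a ^ n * τ ^ n * exp (-τ * b) * τ ^ p := by
        gcongr
        exact exp_neg_div_le_factorial_mul_pow ha hτ n
    _ = _ := by ring_nf

lemma besselKIntegral_mul_left {c : ℝ} (hc : 0 < c) (p a b : ℝ) :
    besselKIntegral p (c * a) b = c ^ (p + 1) * besselKIntegral p a (c * b) := by
  have h := integral_comp_mul_left_Ioi'
    (fun τ => exp (-(c * a) / τ) * exp (-τ * b) * τ ^ p) 0 hc
  rw [mul_zero, smul_eq_mul] at h
  rw [besselKIntegral, ← h, besselKIntegral, ← integral_const_mul, ← integral_const_mul]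
  refine setIntegral_congr_fun measurableSet_Ioi fun σ (hσ : 0 < σ) => ?_
  rw [mul_rpow hc.le hσ.le, rpow_add_one hc.ne']
  field_simp

lemma besselKIntegral_eq_rpow_mul {b : ℝ} (hb : 0 < b) (p a : ℝ) :
    besselKIntegral p a b = b ^ (-(p + 1)) * besselKIntegral p (b * a) 1 := by
  rw [besselKIntegral_mul_left hb, mul_one, ← mul_assoc, ← rpow_add hb, neg_add_cancel,
    rpow_zero, one_mul]

lemma hasDerivAt_besselKIntegral {a b : ℝ} (ha : 0 < a) (hb : 0 < b) (p : ℝ) :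
    HasDerivAt (besselKIntegral p a) (-besselKIntegral (p + 1) a b) b := by
  have hball : Metric.ball b (b / 2) ⊆ Ioi (b / 2) := fun y hy => by
    have := (abs_lt.mp (Real.dist_eq y b ▸ Metric.mem_ball.mp hy)).1
    simp only [mem_Ioi]; linarith
  have key := hasDerivAt_integral_of_dominated_loc_of_deriv_le (μ := volume.restrict (Ioi 0))
    (F := fun y τ => exp (-a / τ) * exp (-τ * y) * τ ^ p)
    (F' := fun y τ => -(exp (-a / τ) * exp (-τ * y) * τ ^ (p + 1)))
    (bound := fun τ => exp (-a / τ) * exp (-τ * (b / 2)) * τ ^ (p + 1))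
    (Metric.ball_mem_nhds b (half_pos hb)) (.of_forall fun y => by fun_prop)
    (integrableOn_besselKIntegrand ha hb p) (by fun_prop) ?_
    (integrableOn_besselKIntegrand ha (half_pos hb) _) ?_
  · rw [besselKIntegral, ← integral_neg]
    exact key.2
  · filter_upwards [ae_restrict_mem measurableSet_Ioi] with τ (hτ : 0 < τ) y hy
    rw [norm_neg, norm_of_nonneg (by positivity)]
    have hy' : b / 2 < y := hball hy
    have : exp (-τ * y) ≤ exp (-τ * (b / 2)) := exp_le_exp.mpr (by nlinarith)
    gcongr
  · filter_upwards [ae_restrict_mem measurableSet_Ioi] with τ (hτ : 0 < τ) y hy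
    have h := (((hasDerivAt_id' y).const_mul (-τ)).exp.const_mul (exp (-a / τ))).mul_const (τ ^ p)
    refine h.congr_deriv ?_
    rw [rpow_add_one hτ.ne']
    ring

lemma tendsto_besselKIntegral_zero {p : ℝ} (hp : -1 < p) :
    Tendsto (fun a => besselKIntegral p a 1) (𝓝[>] 0) (𝓝 (Gamma (p + 1))) := by
  have hΓ : Gamma (p + 1) = ∫ τ in Ioi 0, exp (-0 / τ) * exp (-τ * 1) * τ ^ p := by
    rw [Gamma_eq_integral (by linarith), add_sub_cancel_right]
    simp
  rw [hΓ]
  refine tendsto_integral_filter_of_dominated_convergence (fun τ => exp (-τ) * τ ^ p)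
    (.of_forall fun a => by fun_prop) ?_ ?_ ?_
  · filter_upwards [self_mem_nhdsWithin] with a (ha : 0 < a)
    filter_upwards [ae_restrict_mem measurableSet_Ioi] with τ (hτ : 0 < τ)
    rw [norm_of_nonneg (by positivity), mul_one]
    have : exp (-a / τ) ≤ 1 := exp_le_one_iff.mpr (div_nonpos_of_nonpos_of_nonneg
      (by linarith) hτ.le)
    calc exp (-a / τ) * exp (-τ) * τ ^ p ≤ 1 * exp (-τ) * τ ^ p := by gcongr
      _ = _ := by rw [one_mul]
  · have := GammaIntegral_convergent (show 0 < p + 1 by linarith)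
    rwa [add_sub_cancel_right] at this
  · filter_upwards [ae_restrict_mem measurableSet_Ioi] with τ (hτ : 0 < τ)
    exact ((continuous_exp.comp (by fun_prop : Continuous fun a : ℝ => -a / τ)).mul
      continuous_const |>.mul continuous_const).tendsto 0 |>.mono_left nhdsWithin_le_nhds

lemma hasDerivAt_besselKIntegral_sq_mul {a c ρ : ℝ} (ha : 0 < a) (hc : 0 < c) (hρ : ρ ≠ 0)
    (p : ℝ) : HasDerivAt (fun r => besselKIntegral p a (r ^ 2 * c))
      (-besselKIntegral (p + 1) a (ρ ^ 2 * c) * (2 * ρ * c)) ρ := by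
  have hsq : HasDerivAt (fun r : ℝ => r ^ 2 * c) (2 * ρ * c) ρ := by
    simpa using (hasDerivAt_pow 2 ρ).mul_const c
  exact (hasDerivAt_besselKIntegral ha (by positivity) p).comp ρ hsq

lemma rpow_mul_integral_eq_besselKIntegral {s lam ρ : ℝ} (hρ : 0 < ρ) :
    ρ ^ s * ∫ τ in Ioi 0, exp (-ρ ^ 2 / (4 * τ)) * exp (-τ * lam ^ 2) * τ ^ (-s / 2 - 1)
      = besselKIntegral (-s / 2 - 1) (1 / 4) (ρ ^ 2 * lam ^ 2) := by
  have h : (∫ τ in Ioi 0, exp (-ρ ^ 2 / (4 * τ)) * exp (-τ * lam ^ 2) * τ ^ (-s / 2 - 1))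
      = besselKIntegral (-s / 2 - 1) (ρ ^ 2 * (1 / 4)) (lam ^ 2) := by
    refine setIntegral_congr_fun measurableSet_Ioi fun τ _ => ?_
    ring_nf
  rw [h, besselKIntegral_mul_left (by positivity), ← rpow_natCast, ← rpow_mul hρ.le,
    ← mul_assoc, ← rpow_add hρ, show s + ((2 : ℕ) : ℝ) * (-s / 2 - 1 + 1) = 0 by push_cast; ring,
    rpow_zero, one_mul]

lemma rpow_one_sub_mul_sq_mul_sq_rpow {s lam ρ : ℝ} (hlam : 0 < lam) (hρ : 0 < ρ) :
    ρ ^ (1 - s) * ((ρ ^ 2 * lam ^ 2) ^ (-(-s / 2 + 1)) * (2 * ρ * lam ^ 2)) = 2 * lam ^ s := by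
  rw [mul_rpow (by positivity) (by positivity), ← rpow_natCast, ← rpow_natCast,
    ← rpow_mul hρ.le, ← rpow_mul hlam.le]
  calc _ = 2 * (ρ ^ (1 - s) * ρ ^ ((2 : ℕ) * -(-s / 2 + 1)) * ρ ^ (1 : ℝ)) *
      (lam ^ ((2 : ℕ) * -(-s / 2 + 1)) * lam ^ ((2 : ℕ) : ℝ)) := by rw [rpow_one]; ring
    _ = 2 * lam ^ s := by
      rw [← rpow_add hρ, ← rpow_add hρ, ← rpow_add hlam,
        show 1 - s + (2 : ℕ) * -(-s / 2 + 1) + 1 = (0 : ℝ) by push_cast; ring,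
        show (2 : ℕ) * -(-s / 2 + 1) + (2 : ℕ) = s by push_cast; ring, rpow_zero, mul_one]

theorem stmt8_general (s lam : ℝ) (hs1 : s < 1) (hlam : 0 < lam)
    (u : ℝ → ℝ)
    (hu : ∀ ρ : ℝ, u ρ = ρ ^ s * ((1 / Real.Gamma s) *
      ∫ τ in Set.Ioi (0 : ℝ),
        Real.exp (-ρ ^ 2 / (4 * τ)) * Real.exp (-τ * lam ^ 2) * τ ^ (-s / 2 - 1))) :
    Tendsto (fun ρ : ℝ => ρ ^ (1 - s) * deriv u ρ)
      (nhdsWithin 0 (Set.Ioi 0))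
      (nhds (-(2 * Real.Gamma (1 - s / 2) / Real.Gamma s) * lam ^ s)) := by
  have hu' : ∀ ρ > 0, u ρ = besselKIntegral (-s / 2 - 1) (1 / 4) (ρ ^ 2 * lam ^ 2) / Gamma s :=
    fun ρ hρ => by rw [hu, mul_left_comm, rpow_mul_integral_eq_besselKIntegral hρ]; ring
  have hderiv : ∀ ρ > 0, ρ ^ (1 - s) * deriv u ρ
      = -(2 * lam ^ s / Gamma s) * besselKIntegral (-s / 2) (ρ ^ 2 * lam ^ 2 * (1 / 4)) 1 := by
    intro ρ hρ
    have hloc : u =ᶠ[𝓝 ρ]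
        fun r => besselKIntegral (-s / 2 - 1) (1 / 4) (r ^ 2 * lam ^ 2) / Gamma s :=
      eventually_of_mem (Ioi_mem_nhds hρ) hu'
    rw [hloc.deriv_eq, ((hasDerivAt_besselKIntegral_sq_mul (by norm_num) (by positivity)
      hρ.ne' _).div_const _).deriv, sub_add_cancel, besselKIntegral_eq_rpow_mul (by positivity),
      ← rpow_one_sub_mul_sq_mul_sq_rpow hlam hρ]
    ring
  have hsq : Tendsto (fun ρ : ℝ => ρ ^ 2 * lam ^ 2 * (1 / 4)) (𝓝[>] 0) (𝓝[>] 0) := by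
    refine tendsto_nhdsWithin_of_tendsto_nhds_of_eventually_within _ ?_ ?_
    · exact ((continuous_pow 2).mul continuous_const |>.mul continuous_const).tendsto' 0 0 (by simp)
        |>.mono_left nhdsWithin_le_nhds
    · filter_upwards [self_mem_nhdsWithin] with ρ (hρ : 0 < ρ)
      exact mem_Ioi.mpr (by positivity)
  have hlim := ((tendsto_besselKIntegral_zero (p := -s / 2) (by linarith)).comp hsq).const_mul
    (-(2 * lam ^ s / Gamma s))
  rw [show -(2 * Gamma (1 - s / 2) / Gamma s) * lam ^ s
    = -(2 * lam ^ s / Gamma s) * Gamma (-s / 2 + 1) by ring_nf]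
  exact hlim.congr' (eventually_nhdsWithin_of_forall fun ρ hρ => (hderiv ρ hρ).symm)

/-- Scalar version of the paper's claim (2.2): with
`u(ρ) = ρ^s Γ(s)⁻¹ ∫₀^∞ e^{−ρ²/(4τ)} e^{−τλ²} τ^{−s/2−1} dτ`, the quantity
`ρ^{1−s} u'(ρ)` converges as `ρ → 0⁺` to `−(2Γ(1−s/2)/Γ(s)) λ^s`. -/
theorem stmt8 (s lam : ℝ) (hs : 0 < s) (hs1 : s < 1) (hlam : 0 < lam)
    (u : ℝ → ℝ)
    (hu : ∀ ρ : ℝ, u ρ = ρ ^ s * ((1 / Real.Gamma s) *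
      ∫ τ in Set.Ioi (0 : ℝ),
        Real.exp (-ρ ^ 2 / (4 * τ)) * Real.exp (-τ * lam ^ 2) * τ ^ (-s / 2 - 1))) :
    Tendsto (fun ρ : ℝ => ρ ^ (1 - s) * deriv u ρ)
      (nhdsWithin 0 (Set.Ioi 0))
      (nhds (-(2 * Real.Gamma (1 - s / 2) / Real.Gamma s) * lam ^ s)) :=
  stmt8_general s lam hs1 hlam u hu
end

section
/- Fix real numbers s with 0 < s < 1 and λ > 0, and for ρ > 0 define u(ρ) = ρ^s · (1/Γ(s)) ∫₀^∞ e^{−ρ²/(4τ)} e^{−τ λ²} τ^{−s/2 − 1} dτ. Then u(ρ) converges as ρ → 0⁺ and its limit equals 2^s Γ(s/2)/Γ(s); in particular the boundary value is independent of λ. -/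
open MeasureTheory Real Filter Set Topology

/-!
Substituting `τ = (ρ²/4) σ` gives `ρ^s ∫₀^∞ e^{-ρ²/(4τ)} e^{-τλ²} τ^{-s/2-1} dτ
= 2^s ∫₀^∞ e^{-1/σ} e^{-(ρ²λ²/4) σ} σ^{-s/2-1} dσ`. As `ρ → 0` the factor `e^{-(ρ²λ²/4) σ}`
increases to `1` under the integrable majorant `e^{-1/σ} σ^{-s/2-1}`, so by dominated convergence
the integral tends to `∫₀^∞ e^{-1/σ} σ^{-s/2-1} dσ`, which is `Γ(s/2)` after `σ = 1/x`.
-/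

section InverseGammaIntegral

variable {a : ℝ}

lemma abs_neg_one_mul_rpow_smul_exp_neg_inv_mul_rpow (a : ℝ) {x : ℝ} (hx : 0 < x) :
    (|(-1 : ℝ)| * x ^ ((-1 : ℝ) - 1)) • (exp (-(x ^ (-1 : ℝ))⁻¹) * (x ^ (-1 : ℝ)) ^ (-a - 1))
      = exp (-x) * x ^ (a - 1) := by
  rw [rpow_neg_one, inv_inv, inv_rpow hx.le, ← rpow_neg hx.le, smul_eq_mul, abs_neg, abs_one,
    one_mul, mul_left_comm, ← rpow_add hx]
  ring_nf

lemma integrableOn_exp_neg_inv_mul_rpow (ha : 0 < a) :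
    IntegrableOn (fun σ : ℝ => exp (-σ⁻¹) * σ ^ (-a - 1)) (Ioi 0) := by
  rw [← integrableOn_Ioi_comp_rpow_iff _ (p := -1) (by norm_num)]
  exact (GammaIntegral_convergent ha).congr_fun
    (fun x hx => (abs_neg_one_mul_rpow_smul_exp_neg_inv_mul_rpow a hx).symm) measurableSet_Ioi

lemma integral_exp_neg_inv_mul_rpow (ha : 0 < a) :
    ∫ σ in Ioi 0, exp (-σ⁻¹) * σ ^ (-a - 1) = Gamma a := by
  rw [← integral_comp_rpow_Ioi _ (p := -1) (by norm_num), Gamma_eq_integral ha]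
  exact setIntegral_congr_fun measurableSet_Ioi
    fun x hx => abs_neg_one_mul_rpow_smul_exp_neg_inv_mul_rpow a hx

lemma tendsto_integral_exp_neg_inv_mul_exp_neg_mul_rpow (ha : 0 < a) :
    Tendsto (fun t => ∫ σ in Ioi 0, exp (-σ⁻¹) * exp (-t * σ) * σ ^ (-a - 1)) (𝓝[≥] 0)
      (𝓝 (Gamma a)) := by
  rw [← integral_exp_neg_inv_mul_rpow ha]
  refine tendsto_integral_filter_of_dominated_convergence _
    (Eventually.of_forall fun t => by fun_prop) ?_ (integrableOn_exp_neg_inv_mul_rpow ha) ?_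
  · filter_upwards [self_mem_nhdsWithin] with t (ht : 0 ≤ t)
    refine (ae_restrict_iff' measurableSet_Ioi).2 (Eventually.of_forall fun σ (hσ : 0 < σ) => ?_)
    have hexp : exp (-t * σ) ≤ 1 := exp_le_one_iff.2 (by nlinarith)
    rw [norm_of_nonneg (by positivity)]
    gcongr
    exact (mul_le_iff_le_one_right (exp_pos _)).2 hexp
  · refine Eventually.of_forall fun σ => ?_
    have hcont : Continuous fun t : ℝ => exp (-σ⁻¹) * exp (-t * σ) * σ ^ (-a - 1) := by fun_prop
    simpa using (hcont.tendsto 0).mono_left nhdsWithin_le_nhds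

end InverseGammaIntegral

lemma integral_exp_neg_div_mul_exp_neg_mul_rpow {r : ℝ} (hr : 0 < r) (b a : ℝ) :
    ∫ τ in Ioi 0, exp (-r / τ) * exp (-τ * b) * τ ^ (-a - 1)
      = r ^ (-a) * ∫ σ in Ioi 0, exp (-σ⁻¹) * exp (-(r * b) * σ) * σ ^ (-a - 1) := by
  have hscale := integral_comp_mul_left_Ioi'
    (fun τ => exp (-r / τ) * exp (-τ * b) * τ ^ (-a - 1)) 0 hr
  rw [mul_zero] at hscale
  rw [← hscale, smul_eq_mul, ← integral_const_mul, ← integral_const_mul]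
  refine setIntegral_congr_fun measurableSet_Ioi fun σ (hσ : 0 < σ) => ?_
  have hr_exp : r * r ^ (-a - 1) = r ^ (-a) := by
    rw [mul_comm, ← rpow_add_one hr.ne']
    ring_nf
  have hinv : -r / (r * σ) = -σ⁻¹ := by field_simp
  rw [hinv, mul_rpow hr.le hσ.le, ← hr_exp]
  ring_nf

lemma rpow_mul_integral_exp_neg_sq_div_mul_exp_neg_mul_rpow (s lam : ℝ) {ρ : ℝ} (hρ : 0 < ρ) :
    ρ ^ s * ∫ τ in Ioi 0, exp (-ρ ^ 2 / (4 * τ)) * exp (-τ * lam ^ 2) * τ ^ (-s / 2 - 1)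
      = 2 ^ s * ∫ σ in Ioi 0,
          exp (-σ⁻¹) * exp (-(ρ ^ 2 / 4 * lam ^ 2) * σ) * σ ^ (-(s / 2) - 1) := by
  have hρ4 : 0 < ρ ^ 2 / 4 := by positivity
  have hpow : ρ ^ s * (ρ ^ 2 / 4) ^ (-(s / 2)) = 2 ^ s := by
    rw [show ρ ^ 2 / 4 = (ρ / 2) ^ (2 : ℝ) by norm_num [div_pow], ← rpow_mul (by positivity),
      show (2 : ℝ) * -(s / 2) = -s by ring, rpow_neg (by positivity), div_rpow hρ.le two_pos.le]
    field_simp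
  simp_rw [show ∀ τ : ℝ, -ρ ^ 2 / (4 * τ) = -(ρ ^ 2 / 4) / τ by intro; ring, neg_div 2 s,
    integral_exp_neg_div_mul_exp_neg_mul_rpow hρ4, ← mul_assoc, hpow]

theorem stmt9_general (s lam : ℝ) (hs : 0 < s)
    (u : ℝ → ℝ)
    (hu : ∀ ρ : ℝ, u ρ = ρ ^ s * ((1 / Real.Gamma s) *
      ∫ τ in Set.Ioi (0 : ℝ),
        Real.exp (-ρ ^ 2 / (4 * τ)) * Real.exp (-τ * lam ^ 2) * τ ^ (-s / 2 - 1))) :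
    Tendsto u (nhdsWithin 0 (Set.Ioi 0))
      (nhds (2 ^ s * Real.Gamma (s / 2) / Real.Gamma s)) := by
  have hu_eq : ∀ ρ ∈ Ioi (0 : ℝ), 2 ^ s / Gamma s * ∫ σ in Ioi 0,
      exp (-σ⁻¹) * exp (-(ρ ^ 2 / 4 * lam ^ 2) * σ) * σ ^ (-(s / 2) - 1) = u ρ := by
    intro ρ hρ
    rw [hu, mul_left_comm, rpow_mul_integral_exp_neg_sq_div_mul_exp_neg_mul_rpow s lam hρ]
    ring
  have hparam : Tendsto (fun ρ : ℝ => ρ ^ 2 / 4 * lam ^ 2) (𝓝[>] 0) (𝓝[≥] 0) := by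
    refine tendsto_nhdsWithin_iff.2 ⟨?_, Eventually.of_forall fun ρ => mem_Ici.2 (by positivity)⟩
    have hcont : Continuous fun ρ : ℝ => ρ ^ 2 / 4 * lam ^ 2 := by fun_prop
    simpa using (hcont.tendsto 0).mono_left nhdsWithin_le_nhds
  have hlim := ((tendsto_integral_exp_neg_inv_mul_exp_neg_mul_rpow (half_pos hs)).comp
    hparam).const_mul (2 ^ s / Gamma s)
  rw [show 2 ^ s / Gamma s * Gamma (s / 2) = 2 ^ s * Gamma (s / 2) / Gamma s by ring] at hlim
  exact hlim.congr' (eventually_nhdsWithin_of_forall hu_eq)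

/-- The solution of the scalar extension problem attains its boundary value:
with `u(ρ) = ρ^s Γ(s)⁻¹ ∫₀^∞ e^{−ρ²/(4τ)} e^{−τλ²} τ^{−s/2−1} dτ`,
`u(ρ) → 2^s Γ(s/2)/Γ(s)` as `ρ → 0⁺`, independently of `λ`. -/
theorem stmt9 (s lam : ℝ) (hs : 0 < s) (hs1 : s < 1) (hlam : 0 < lam)
    (u : ℝ → ℝ)
    (hu : ∀ ρ : ℝ, u ρ = ρ ^ s * ((1 / Real.Gamma s) *
      ∫ τ in Set.Ioi (0 : ℝ),
        Real.exp (-ρ ^ 2 / (4 * τ)) * Real.exp (-τ * lam ^ 2) * τ ^ (-s / 2 - 1))) :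
    Tendsto u (nhdsWithin 0 (Set.Ioi 0))
      (nhds (2 ^ s * Real.Gamma (s / 2) / Real.Gamma s)) :=
  stmt9_general s lam hs u hu
end
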